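/- arXiv:1809.09278 — 8 statements merged into one kernel-verified Lean document; each statement's English description precedes it below -/
import Mathlib

section
/- Let F : M' → M be a right adjoint functor whose left adjoint ι : M → M' is fully faithful (i.e., F is a coreflection), and let P be a subcategory of M. Then for any objects X, Y of M', the objects FX and FY are P-open bisimilar in M (connected by a span of P-open morphisms) if and only if X and Y are ιP-open bisimilar in M' (connected by a span of morphisms that are open with respect to the image of P under ι). -/
open CategoryTheory

/-- A morphism `f : T ⟶ T'` is `P`-open if it has the right lifting property with
respect to all morphisms in the morphism class `P` (the "path subcategory"). -/
def POpen {M : Type*} [Category M] (P : MorphismProperty M) {T T' : M} (f : T ⟶ T') : Prop :=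
  ∀ ⦃A B : M⦄ (e : A ⟶ B), P e → ∀ (p : A ⟶ T) (q' : B ⟶ T'),
    p ≫ f = e ≫ q' → ∃ q : B ⟶ T, e ≫ q = p ∧ q ≫ f = q'

/-- The image `ιP` of a class of morphisms `P` of `M` under a functor `ι : M ⥤ M'`. -/
def imageProp {M M' : Type*} [Category M] [Category M'] (ι : M ⥤ M')
    (P : MorphismProperty M) : MorphismProperty M' :=
  fun X Y f => ∃ (A B : M) (e : A ⟶ B) (hA : ι.obj A = X) (hB : ι.obj B = Y),
    P e ∧ f = eqToHom hA.symm ≫ ι.map e ≫ eqToHom hB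

/-- Two objects are `P`-open bisimilar if they are connected by a span of
`P`-open morphisms. -/
def OpenBisim {M : Type*} [Category M] (P : MorphismProperty M) (X Y : M) : Prop :=
  ∃ (R : M) (u : R ⟶ X) (v : R ⟶ Y), POpen P u ∧ POpen P v


open CategoryTheory in
lemma lem1 {M M' : Type*} [Category M] [Category M'] (F : M' ⥤ M) (ι : M ⥤ M')
    (adj : ι ⊣ F) (P : MorphismProperty M) {T T' : M'} (f : T ⟶ T')
    (hf : POpen (imageProp ι P) f) : POpen P (F.map f) := by
  intro A B e he p q' hsq
  have hsq' : (adj.homEquiv A T).symm p ≫ f = ι.map e ≫ (adj.homEquiv B T').symm q' := by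
    rw [← Adjunction.homEquiv_naturality_right_symm, ← Adjunction.homEquiv_naturality_left_symm,
      hsq]
  obtain ⟨q, hq1, hq2⟩ := hf (ι.map e) ⟨A, B, e, rfl, rfl, he, by simp⟩ _ _ hsq'
  refine ⟨adj.homEquiv B T q, ?_, ?_⟩
  · rw [← Adjunction.homEquiv_naturality_left, hq1, Equiv.apply_symm_apply]
  · rw [← Adjunction.homEquiv_naturality_right, hq2, Equiv.apply_symm_apply]

open CategoryTheory in
lemma lem2 {M M' : Type*} [Category M] [Category M'] (F : M' ⥤ M) (ι : M ⥤ M')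
    [ι.Full] [ι.Faithful] (adj : ι ⊣ F) (P : MorphismProperty M) {R : M} {X : M'}
    (u : R ⟶ F.obj X) (hu : POpen P u) :
    POpen (imageProp ι P) ((adj.homEquiv R X).symm u) := by
  rintro A' B' e' ⟨A, B, e, rfl, rfl, he, rfl⟩ p q' hsq
  simp only [eqToHom_refl, Category.comp_id, Category.id_comp] at hsq ⊢
  obtain ⟨p₀, rfl⟩ := ι.map_surjective p
  have hsq2 : p₀ ≫ u = e ≫ adj.homEquiv B X q' := by
    have := congrArg (adj.homEquiv A X) hsq
    rwa [Adjunction.homEquiv_naturality_left, Adjunction.homEquiv_naturality_left,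
      Equiv.apply_symm_apply] at this
  obtain ⟨q, hq1, hq2⟩ := hu e he p₀ (adj.homEquiv B X q') hsq2
  refine ⟨ι.map q, ?_, ?_⟩
  · rw [← ι.map_comp, hq1]
  · apply (adj.homEquiv B X).injective
    rw [Adjunction.homEquiv_naturality_left, Equiv.apply_symm_apply, hq2]

/-- If `F : M' ⥤ M` is a coreflection (a right adjoint with fully faithful left
adjoint `ι`), then `F X` and `F Y` are `P`-open bisimilar iff `X` and `Y` are
`ιP`-open bisimilar. -/
theorem stmt4 {M M' : Type*} [Category M] [Category M'] (F : M' ⥤ M) (ι : M ⥤ M')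
    [ι.Full] [ι.Faithful] (adj : ι ⊣ F) (P : MorphismProperty M) (X Y : M') :
    OpenBisim P (F.obj X) (F.obj Y) ↔ OpenBisim (imageProp ι P) X Y := by
  constructor
  · rintro ⟨R, u, v, hu, hv⟩
    exact ⟨ι.obj R, (adj.homEquiv R X).symm u, (adj.homEquiv R Y).symm v,
      lem2 F ι adj P u hu, lem2 F ι adj P v hv⟩
  · rintro ⟨R', u', v', hu', hv'⟩
    exact ⟨F.obj R', F.map u', F.map v', lem1 F ι adj P u' hu', lem1 F ι adj P v' hv'⟩
end

section
/- Let F : M' → M be a coreflection with fully faithful left adjoint ι. For any morphism f in M', f is ιP-open in M' if and only if F f is P-open in M. -/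
open CategoryTheory

/-- If `F : M' ⥤ M` is a coreflection with fully faithful left adjoint `ι`, then a
morphism `f` of `M'` is `ιP`-open iff `F f` is `P`-open. -/
theorem stmt6 {M M' : Type*} [Category M] [Category M'] (F : M' ⥤ M) (ι : M ⥤ M')
    [ι.Full] [ι.Faithful] (adj : ι ⊣ F) (P : MorphismProperty M) {X Y : M'}
    (f : X ⟶ Y) : POpen (imageProp ι P) f ↔ POpen P (F.map f) := by
  constructor
  · intro h A B e he p q' hsq
    have hmem : imageProp ι P (ι.map e) :=
      ⟨A, B, e, rfl, rfl, he, by simp⟩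
    have hsq' : (adj.homEquiv A X).symm p ≫ f =
        ι.map e ≫ (adj.homEquiv B Y).symm q' := by
      rw [← adj.homEquiv_naturality_right_symm, ← adj.homEquiv_naturality_left_symm, hsq]
    obtain ⟨Q, hQ1, hQ2⟩ := h (ι.map e) hmem _ _ hsq'
    refine ⟨adj.homEquiv B X Q, ?_, ?_⟩
    · have := adj.homEquiv_naturality_left e Q
      rw [← this, hQ1, Equiv.apply_symm_apply]
    · have := adj.homEquiv_naturality_right Q f
      rw [← this, hQ2, Equiv.apply_symm_apply]
  · intro h A' B' g hg p q' hsq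
    obtain ⟨A, B, e, hA, hB, he, hgeq⟩ := hg
    subst hA hB
    simp only [eqToHom_refl, Category.comp_id, Category.id_comp] at hgeq
    subst hgeq
    have hsq' : (adj.homEquiv A X p) ≫ F.map f = e ≫ (adj.homEquiv B Y q') := by
      rw [← adj.homEquiv_naturality_right, ← adj.homEquiv_naturality_left, hsq]
    obtain ⟨Q, hQ1, hQ2⟩ := h e he _ _ hsq'
    refine ⟨(adj.homEquiv B X).symm Q, ?_, ?_⟩
    · rw [← adj.homEquiv_naturality_left_symm, hQ1, Equiv.symm_apply_apply]
    · rw [← adj.homEquiv_naturality_right_symm, hQ2, Equiv.symm_apply_apply]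
end

section
/- A morphism f : T → T' of labelled transition systems over alphabet Σ is Lin_Σ-open (open with respect to the subcategory of finite linear systems) if and only if the graph relation {(s, f(s)) | s reachable in T} is a strong bisimulation, i.e., f satisfies the zig-zag condition: for every reachable state s of T and every transition (f(s), a, t') in T', there exists a state t of T with (s, a, t) a transition of T and f(t) = t'. -/
open CategoryTheory

/-- A labelled transition system over the alphabet `σ`. -/
structure TS (σ : Type) where
  S : Type
  i : S
  Δ : S → σ → S → Prop

/-- A morphism of transition systems: a function on states preserving the initial
state and the transitions. -/
structure TSHom {σ : Type} (T T' : TS σ) where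
  f : T.S → T'.S
  init : f T.i = T'.i
  trans : ∀ s a t, T.Δ s a t → T'.Δ (f s) a (f t)

@[ext] lemma TSHom.ext {σ : Type} {T T' : TS σ} {g h : TSHom T T'} (w : g.f = h.f) :
    g = h := by
  cases g; cases h; cases w; rfl

/-- The identity morphism of transition systems. -/
def TSHom.id {σ : Type} (T : TS σ) : TSHom T T := ⟨_root_.id, rfl, fun _ _ _ h => h⟩

/-- Composition of morphisms of transition systems. -/
def TSHom.comp {σ : Type} {T T' T'' : TS σ} (g : TSHom T T') (h : TSHom T' T'') :
    TSHom T T'' :=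
  ⟨h.f ∘ g.f, by simp [g.init, h.init], fun s a t ht => h.trans _ _ _ (g.trans _ _ _ ht)⟩

instance {σ : Type} : Category (TS σ) where
  Hom := TSHom
  id := TSHom.id
  comp := TSHom.comp
  id_comp _ := rfl
  comp_id _ := rfl
  assoc _ _ _ := rfl

/-- The finite linear system `L(a₁⋯aₙ)` of a word `w = a₁⋯aₙ`. -/
def Lin (σ : Type) (w : List σ) : TS σ where
  S := Fin (w.length + 1)
  i := ⟨0, Nat.succ_pos _⟩
  Δ s a t := (t : ℕ) = (s : ℕ) + 1 ∧ ∃ h : (s : ℕ) < w.length, w.get ⟨s, h⟩ = a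

/-- A morphism of transition systems is `Lin_Σ`-open if it has the right lifting
property against all morphisms between finite linear systems. -/
def LinOpen {σ : Type} {T T' : TS σ} (f : T ⟶ T') : Prop :=
  ∀ (w w' : List σ) (e : Lin σ w ⟶ Lin σ w') (p : Lin σ w ⟶ T) (q' : Lin σ w' ⟶ T'),
    p ≫ f = e ≫ q' → ∃ q : Lin σ w' ⟶ T, e ≫ q = p ∧ q ≫ f = q'

/-- A state is reachable if there is a path of transitions from the initial state. -/
def Reachable {σ : Type} (T : TS σ) (s : T.S) : Prop :=
  Relation.ReflTransGen (fun x y => ∃ a, T.Δ x a y) T.i s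



namespace StmtAux

/-- Build a morphism from a linear system out of a `ℕ`-indexed path. -/
def mkHom {σ : Type} (w : List σ) (T : TS σ) (g : ℕ → T.S) (h0 : g 0 = T.i)
    (hs : ∀ j (h : j < w.length), T.Δ (g j) (w.get ⟨j, h⟩) (g (j+1))) :
    Lin σ w ⟶ T where
  f := fun j => g j.val
  init := h0
  trans := by
    rintro s a t ⟨h1, hlt, rfl⟩
    have := hs s.val hlt
    show T.Δ (g s.val) _ (g t.val)
    rw [h1]
    exact this

lemma e_val {σ : Type} {w w' : List σ} (e : Lin σ w ⟶ Lin σ w') :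
    ∀ k (hk : k ≤ w.length),
      Fin.val (n := w'.length + 1) (TSHom.f e ⟨k, by omega⟩) = k := by
  intro k
  induction k with
  | zero =>
    intro _
    exact congrArg Fin.val e.init
  | succ k ih =>
    intro hk
    have hlt : k < w.length := by omega
    have htr : (Lin σ w).Δ ⟨k, by omega⟩ (w.get ⟨k, hlt⟩) ⟨k+1, by omega⟩ :=
      ⟨rfl, hlt, rfl⟩
    have h2 := e.trans _ _ _ htr
    obtain ⟨h1, _, _⟩ := h2
    rw [h1, ih (by omega)]

lemma e_prefix {σ : Type} {w w' : List σ} (e : Lin σ w ⟶ Lin σ w') :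
    ∀ k (hk : k < w.length),
      ∃ hm : k < w'.length, w'.get ⟨k, hm⟩ = w.get ⟨k, hk⟩ := by
  intro k hk
  have htr : (Lin σ w).Δ ⟨k, by omega⟩ (w.get ⟨k, hk⟩) ⟨k+1, by omega⟩ :=
    ⟨rfl, hk, rfl⟩
  obtain ⟨h1, hm0, h3⟩ := e.trans _ _ _ htr
  have hv := e_val e k (by omega)
  have hm : k < w'.length := hv ▸ hm0
  refine ⟨hm, ?_⟩
  have : (⟨k, hm⟩ : Fin w'.length) = ⟨_, hm0⟩ := Fin.ext hv.symm
  rw [this]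
  exact h3

lemma e_len {σ : Type} {w w' : List σ} (e : Lin σ w ⟶ Lin σ w') :
    w.length ≤ w'.length := by
  have h1 := Fin.isLt (n := w'.length + 1) (TSHom.f e ⟨w.length, by omega⟩)
  have hv := e_val e w.length le_rfl
  omega

end StmtAux

namespace StmtAux

variable {σ : Type} {T T' : TS σ}

open scoped Classical in
/-- Inductively defined lift along a linear system. -/
noncomputable def Q (f : TSHom T T') (w w' : List σ)
    (p : Lin σ w ⟶ T) (q' : Lin σ w' ⟶ T') : ℕ → T.S
  | 0 => T.i
  | j+1 =>
    if _ : j + 1 ≤ w.length then TSHom.f p ⟨j+1, by omega⟩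
    else if h2 : ∃ t, ∃ hm : j < w'.length,
        T.Δ (Q f w w' p q' j) (w'.get ⟨j, hm⟩) t ∧
          TSHom.f f t = TSHom.f q' ⟨j+1, by omega⟩
      then h2.choose else Q f w w' p q' j

lemma Qinv (f : T ⟶ T') (w w' : List σ) (e : Lin σ w ⟶ Lin σ w')
    (p : Lin σ w ⟶ T) (q' : Lin σ w' ⟶ T')
    (hsq : p ≫ f = e ≫ q')
    (zig : ∀ s, Reachable T s → ∀ a t', T'.Δ (TSHom.f f s) a t' →
        ∃ t, T.Δ s a t ∧ TSHom.f f t = t') :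
    ∀ j (hj : j ≤ w'.length),
      Reachable T (Q f w w' p q' j) ∧
      TSHom.f f (Q f w w' p q' j) = TSHom.f q' ⟨j, by omega⟩ ∧
      (∀ hn : j ≤ w.length, Q f w w' p q' j = TSHom.f p ⟨j, by omega⟩) ∧
      (∀ k (hk : k < j), T.Δ (Q f w w' p q' k)
        (w'.get ⟨k, by omega⟩) (Q f w w' p q' (k+1))) := by
  have hlen := e_len e
  intro j
  induction j with
  | zero =>
    intro _
    refine ⟨Relation.ReflTransGen.refl, ?_, ?_, by omega⟩
    · show TSHom.f f T.i = _
      rw [f.init, ← q'.init]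
      rfl
    · intro _
      show T.i = _
      rw [← p.init]
      rfl
  | succ j ih =>
    intro hj
    obtain ⟨hreach, hf, hp, htr⟩ := ih (by omega)
    -- label of the step from j to j+1
    have hjm : j < w'.length := by omega
    -- The new step transition and image.
    have key : T.Δ (Q f w w' p q' j) (w'.get ⟨j, hjm⟩) (Q f w w' p q' (j+1)) ∧
        TSHom.f f (Q f w w' p q' (j+1)) = TSHom.f q' ⟨j+1, by omega⟩ ∧
        (∀ hn : j + 1 ≤ w.length, Q f w w' p q' (j+1) = TSHom.f p ⟨j+1, by omega⟩) := by
      by_cases h : j + 1 ≤ w.length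
      · have hQ : Q f w w' p q' (j+1) = TSHom.f p ⟨j+1, by omega⟩ := by
          rw [Q, dif_pos h]
        have hjn : j < w.length := by omega
        obtain ⟨hm, hget⟩ := e_prefix e j hjn
        have htrw : (Lin σ w).Δ ⟨j, by omega⟩ (w.get ⟨j, hjn⟩) ⟨j+1, by omega⟩ :=
          ⟨rfl, hjn, rfl⟩
        have hTstep := p.trans _ _ _ htrw
        have hsq' := congrFun (congrArg TSHom.f hsq) ⟨j+1, by omega⟩
        have hev : TSHom.f e ⟨j+1, by omega⟩ = (⟨j+1, by omega⟩ : Fin (w'.length + 1)) :=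
          Fin.ext (e_val e (j+1) h)
        refine ⟨?_, ?_, fun _ => hQ⟩
        · rw [hQ, hp (by omega)]
          have : w'.get ⟨j, hjm⟩ = w.get ⟨j, hjn⟩ := hget
          rw [this]
          exact hTstep
        · rw [hQ]
          have : TSHom.f f (TSHom.f p ⟨j+1, by omega⟩) =
              TSHom.f q' (TSHom.f e ⟨j+1, by omega⟩) := hsq'
          rw [this, hev]
      · -- use the zig-zag condition
        have htrw' : (Lin σ w').Δ ⟨j, by omega⟩ (w'.get ⟨j, hjm⟩) ⟨j+1, by omega⟩ :=
          ⟨rfl, hjm, rfl⟩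
        have hT'step := q'.trans _ _ _ htrw'
        rw [← hf] at hT'step
        obtain ⟨t, ht1, ht2⟩ := zig _ hreach _ _ hT'step
        have h2 : ∃ t, ∃ hm : j < w'.length,
            T.Δ (Q f w w' p q' j) (w'.get ⟨j, hm⟩) t ∧
              TSHom.f f t = TSHom.f q' ⟨j+1, by omega⟩ := ⟨t, hjm, ht1, ht2⟩
        have hQ : Q f w w' p q' (j+1) = h2.choose := by
          rw [Q, dif_neg h, dif_pos h2]
        obtain ⟨hm', hc1, hc2⟩ := h2.choose_spec
        exact ⟨by rw [hQ]; exact hc1, by rw [hQ]; exact hc2, fun hn => absurd hn h⟩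
    refine ⟨?_, key.2.1, key.2.2, ?_⟩
    · exact hreach.tail ⟨_, key.1⟩
    · intro k hk
      rcases Nat.lt_succ_iff_lt_or_eq.mp hk with hk' | rfl
      · exact htr k hk'
      · exact key.1

end StmtAux

/-- A morphism `f` is `Lin_Σ`-open iff its graph on reachable states is a strong
bisimulation, i.e. `f` satisfies the zig-zag condition on reachable states. -/
theorem stmt7 {σ : Type} {T T' : TS σ} (f : T ⟶ T') :
    LinOpen f ↔
      ∀ s, Reachable T s → ∀ a t', T'.Δ (TSHom.f f s) a t' →
        ∃ t, T.Δ s a t ∧ TSHom.f f t = t' := by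
  constructor
  · intro ho s hs a t' hδ
    obtain ⟨w, g, hg0, hgs, hglast⟩ : ∃ (w : List σ) (g : ℕ → T.S), g 0 = T.i ∧
        (∀ j (h : j < w.length), T.Δ (g j) (w.get ⟨j, h⟩) (g (j+1))) ∧ g w.length = s := by
      clear hδ
      induction hs with
      | refl => exact ⟨[], fun _ => T.i, rfl, fun j h => absurd h (by simp), rfl⟩
      | @tail b c h1 h2 ih =>
        obtain ⟨w, g, hg0, hgs, hglast⟩ := ih
        obtain ⟨a0, ha0⟩ := h2
        refine ⟨w ++ [a0], fun j => if j ≤ w.length then g j else c, by simp [hg0], ?_, ?_⟩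
        · intro j h
          have h' : j < w.length + 1 := by simpa using h
          by_cases hj : j < w.length
          · have e1 : (if j ≤ w.length then g j else c) = g j := if_pos (by omega)
            have e2 : (if j + 1 ≤ w.length then g (j+1) else c) = g (j+1) := if_pos (by omega)
            have e3 : (w ++ [a0]).get ⟨j, h⟩ = w.get ⟨j, hj⟩ := by
              simp only [List.get_eq_getElem]
              exact List.getElem_append_left hj
            beta_reduce
            rw [e1, e2, e3]
            exact hgs j hj
          · have hj' : j = w.length := by omega
            subst hj'
            have e1 : (if w.length ≤ w.length then g w.length else c) = g w.length :=
              if_pos le_rfl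
            have e2 : (if w.length + 1 ≤ w.length then g (w.length + 1) else c) = c :=
              if_neg (by omega)
            have e3 : (w ++ [a0]).get ⟨w.length, h⟩ = a0 := by
              simp
            beta_reduce
            rw [e1, e2, e3, hglast]
            exact ha0
        · simp
    -- now build the lifting problem
    have hδ' : T'.Δ (TSHom.f f (g w.length)) a t' := by rw [hglast]; exact hδ
    let p : Lin σ w ⟶ T := StmtAux.mkHom w T g hg0 hgs
    let G' : ℕ → T'.S := fun j => if j ≤ w.length then TSHom.f f (g j) else t'
    have hG'0 : G' 0 = T'.i := by
      show (if 0 ≤ w.length then TSHom.f f (g 0) else t') = T'.i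
      rw [if_pos (by omega), hg0, f.init]
    have hG's : ∀ j (h : j < (w ++ [a]).length),
        T'.Δ (G' j) ((w ++ [a]).get ⟨j, h⟩) (G' (j+1)) := by
      intro j h
      have h' : j < w.length + 1 := by simpa using h
      by_cases hj : j < w.length
      · have e1 : G' j = TSHom.f f (g j) := if_pos (by omega)
        have e2 : G' (j+1) = TSHom.f f (g (j+1)) := if_pos (by omega)
        have e3 : (w ++ [a]).get ⟨j, h⟩ = w.get ⟨j, hj⟩ := by
          simp only [List.get_eq_getElem]
          exact List.getElem_append_left hj
        rw [e1, e2, e3]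
        exact f.trans _ _ _ (hgs j hj)
      · have hj' : j = w.length := by omega
        subst hj'
        have e1 : G' w.length = TSHom.f f (g w.length) := if_pos le_rfl
        have e2 : G' (w.length + 1) = t' := if_neg (by omega)
        have e3 : (w ++ [a]).get ⟨w.length, h⟩ = a := by simp
        rw [e1, e2, e3]
        exact hδ'
    let q'h : Lin σ (w ++ [a]) ⟶ T' := StmtAux.mkHom (w ++ [a]) T' G' hG'0 hG's
    let e : Lin σ w ⟶ Lin σ (w ++ [a]) :=
      { f := fun j => ⟨j.val, by have := j.isLt; simp; omega⟩
        init := rfl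
        trans := by
          rintro s0 a0 t0 ⟨h1, hlt, rfl⟩
          refine ⟨h1, ?_, ?_⟩
          · show s0.val < (w ++ [a]).length
            simp only [List.length_append, List.length_singleton]; omega
          · show (w ++ [a]).get ⟨s0.val, _⟩ = w.get ⟨s0.val, hlt⟩
            simp only [List.get_eq_getElem]
            exact List.getElem_append_left hlt }
    have hsq : p ≫ f = e ≫ q'h := by
      apply TSHom.ext
      funext j
      show TSHom.f f (g j.val) = if j.val ≤ w.length then TSHom.f f (g j.val) else t'
      rw [if_pos (by have := j.isLt; omega)]
    obtain ⟨q, hq1, hq2⟩ := ho w (w ++ [a]) e p q'h hsq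
    have hlen1 : w.length < (w ++ [a]).length + 1 := by
      simp only [List.length_append, List.length_singleton]; omega
    have hlen2 : w.length + 1 < (w ++ [a]).length + 1 := by
      simp only [List.length_append, List.length_singleton]; omega
    refine ⟨TSHom.f q ⟨w.length + 1, hlen2⟩, ?_, ?_⟩
    · have htrL : (Lin σ (w ++ [a])).Δ ⟨w.length, hlen1⟩ a ⟨w.length + 1, hlen2⟩ := by
        refine ⟨rfl, ?_, ?_⟩
        · show w.length < (w ++ [a]).length
          simp only [List.length_append, List.length_singleton]; omega
        · show (w ++ [a]).get ⟨w.length, _⟩ = a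
          simp
      have hstep := q.trans _ _ _ htrL
      have h5 : TSHom.f q ⟨w.length, hlen1⟩ = s := by
        have := congrFun (congrArg TSHom.f hq1) ⟨w.length, by omega⟩
        exact this.trans hglast
      rw [h5] at hstep
      exact hstep
    · have h6 := congrFun (congrArg TSHom.f hq2) ⟨w.length + 1, hlen2⟩
      have h7 : TSHom.f f (TSHom.f q ⟨w.length + 1, hlen2⟩) =
          if w.length + 1 ≤ w.length then TSHom.f f (g (w.length + 1)) else t' := h6
      rw [if_neg (by omega)] at h7
      exact h7
  · intro zig w w' e p q' hsq
    have hlen := StmtAux.e_len e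
    have hinv := StmtAux.Qinv f w w' e p q' hsq zig
    refine ⟨StmtAux.mkHom w' T (StmtAux.Q f w w' p q') rfl
      (fun j h => (hinv w'.length le_rfl).2.2.2 j h), ?_, ?_⟩
    · apply TSHom.ext
      funext j
      have hj := j.isLt
      have hev : Fin.val (TSHom.f e j) = j.val := StmtAux.e_val e j.val (by omega)
      show StmtAux.Q f w w' p q' (Fin.val (TSHom.f e j)) = TSHom.f p j
      rw [hev]
      exact (hinv j.val (by omega)).2.2.1 (by omega)
    · apply TSHom.ext
      funext j
      have hj := j.isLt
      exact (hinv j.val (by omega)).2.1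
end

section
/- For any strong bisimulation R between labelled transition systems T and T' over Σ (relating initial states), the transition system T_R with state space R, initial state (i, i'), and transitions ((s,s'), a, (t,t')) whenever (s,a,t) ∈ Δ and (s',a,t') ∈ Δ', together with the two projections π₁ : T_R → T and π₂ : T_R → T', forms a span of Lin_Σ-open morphisms. -/
open CategoryTheory

/-- A strong bisimulation between two transition systems, relating the initial
states. -/
def StrongBisim {σ : Type} (T T' : TS σ) (R : T.S → T'.S → Prop) : Prop :=
  R T.i T'.i ∧
  (∀ s s', R s s' → ∀ a t, T.Δ s a t → ∃ t', T'.Δ s' a t' ∧ R t t') ∧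
  (∀ s s', R s s' → ∀ a t', T'.Δ s' a t' → ∃ t, T.Δ s a t ∧ R t t')

/-- The relation transition system `T_R` associated to a relation `R` relating the
initial states. -/
def relTS {σ : Type} (T T' : TS σ) (R : T.S → T'.S → Prop) (h : R T.i T'.i) : TS σ where
  S := {p : T.S × T'.S // R p.1 p.2}
  i := ⟨(T.i, T'.i), h⟩
  Δ p a q := T.Δ p.val.1 a q.val.1 ∧ T'.Δ p.val.2 a q.val.2

open scoped Classical in
noncomputable def liftFun {σ : Type} {U T : TS σ} (f : TSHom U T) (w w' : List σ)
    (p : TSHom (Lin σ w) U) (q' : TSHom (Lin σ w') T) : ℕ → U.S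
  | 0 => p.f ⟨0, Nat.succ_pos _⟩
  | n + 1 =>
    if hle : n + 1 ≤ w.length then p.f ⟨n + 1, Nat.lt_succ_of_le hle⟩
    else if hlt : n < w'.length then
      (if hex : ∃ v, U.Δ (liftFun f w w' p q' n) (w'.get ⟨n, hlt⟩) v ∧
          f.f v = q'.f ⟨n + 1, Nat.succ_lt_succ hlt⟩
       then hex.choose else liftFun f w w' p q' n)
    else liftFun f w w' p q' n

lemma linOpen_of_zig {σ : Type} {U T : TS σ} (f : U ⟶ T)
    (zig : ∀ u a t, T.Δ (TSHom.f f u) a t → ∃ v, U.Δ u a v ∧ TSHom.f f v = t) :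
    LinOpen f := by
  classical
  intro w w' e p q' hsq
  have hsq' : ∀ k, TSHom.f f (TSHom.f p k) = TSHom.f q' (TSHom.f e k) :=
    fun k => congrFun (congrArg TSHom.f hsq) k
  -- e is the inclusion
  have he : ∀ n (hn : n < w.length + 1), (TSHom.f e ⟨n, hn⟩).val = n := by
    intro n
    induction n with
    | zero =>
      intro hn
      exact congrArg Fin.val (TSHom.init e)
    | succ n ih =>
      intro hn
      have hlt : n < w.length := Nat.lt_of_succ_lt_succ hn
      have htr : (Lin σ w).Δ ⟨n, Nat.lt_of_succ_lt hn⟩ (w.get ⟨n, hlt⟩) ⟨n + 1, hn⟩ :=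
        ⟨rfl, hlt, rfl⟩
      have h1 := (TSHom.trans e _ _ _ htr).1
      rw [ih (Nat.lt_of_succ_lt hn)] at h1
      exact h1
  have hlen : w.length ≤ w'.length := by
    have := (TSHom.f e ⟨w.length, Nat.lt_succ_self _⟩).isLt
    rw [he w.length (Nat.lt_succ_self _)] at this
    omega
  have hpref : ∀ n (hlt : n < w.length), ∃ h' : n < w'.length,
      w'.get ⟨n, h'⟩ = w.get ⟨n, hlt⟩ := by
    intro n hlt
    have htr : (Lin σ w).Δ ⟨n, Nat.lt_of_succ_lt (Nat.succ_lt_succ hlt)⟩ (w.get ⟨n, hlt⟩)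
        ⟨n + 1, Nat.succ_lt_succ hlt⟩ := ⟨rfl, hlt, rfl⟩
    obtain ⟨-, h2, hg⟩ := TSHom.trans e _ _ _ htr
    have h2' : n < w'.length := by
      have := he n (Nat.lt_of_succ_lt (Nat.succ_lt_succ hlt)); omega
    exact ⟨h2', (congrArg w'.get (Fin.ext
      (he n (Nat.lt_of_succ_lt (Nat.succ_lt_succ hlt))).symm)).trans hg⟩
  set g : ℕ → U.S := liftFun f w w' p q' with hgdef
  have hg0 : g 0 = TSHom.f p ⟨0, Nat.succ_pos _⟩ := rfl
  have hgle : ∀ n (hle : n + 1 ≤ w.length),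
      g (n + 1) = TSHom.f p ⟨n + 1, Nat.lt_succ_of_le hle⟩ := by
    intro n hle
    show liftFun f w w' p q' (n + 1) = _
    rw [liftFun, dif_pos hle]
  have hgch : ∀ n (hle : ¬ n + 1 ≤ w.length) (hlt : n < w'.length)
      (hex : ∃ v, U.Δ (g n) (w'.get ⟨n, hlt⟩) v ∧
        TSHom.f f v = TSHom.f q' ⟨n + 1, Nat.succ_lt_succ hlt⟩),
      g (n + 1) = hex.choose := by
    intro n hle hlt hex
    show liftFun f w w' p q' (n + 1) = _
    rw [liftFun, dif_neg hle, dif_pos hlt, dif_pos hex]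
  -- invariant
  have key : ∀ n (hn : n < w'.length + 1),
      TSHom.f f (g n) = TSHom.f q' ⟨n, hn⟩ ∧
      ∀ hw : n ≤ w.length, g n = TSHom.f p ⟨n, Nat.lt_succ_of_le hw⟩ := by
    intro n
    induction n with
    | zero =>
      intro hn
      refine ⟨?_, fun _ => hg0⟩
      rw [hg0, hsq' ⟨0, Nat.succ_pos _⟩]
      congr 1
      exact Fin.ext (he 0 (Nat.succ_pos _))
    | succ n ih =>
      intro hn
      have hn' : n < w'.length := Nat.lt_of_succ_lt_succ hn
      by_cases hle : n + 1 ≤ w.length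
      · refine ⟨?_, fun _ => hgle n hle⟩
        rw [hgle n hle, hsq' ⟨n + 1, Nat.lt_succ_of_le hle⟩]
        congr 1
        exact Fin.ext (he (n + 1) (Nat.lt_succ_of_le hle))
      · obtain ⟨hf, -⟩ := ih (Nat.lt_of_succ_lt hn)
        have htr : (Lin σ w').Δ ⟨n, Nat.lt_of_succ_lt hn⟩ (w'.get ⟨n, hn'⟩)
            ⟨n + 1, Nat.succ_lt_succ hn'⟩ := ⟨rfl, hn', rfl⟩
        have hTΔ : T.Δ (TSHom.f f (g n)) (w'.get ⟨n, hn'⟩)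
            (TSHom.f q' ⟨n + 1, Nat.succ_lt_succ hn'⟩) := by
          rw [hf]; exact TSHom.trans q' _ _ _ htr
        have hex : ∃ v, U.Δ (g n) (w'.get ⟨n, hn'⟩) v ∧
            TSHom.f f v = TSHom.f q' ⟨n + 1, Nat.succ_lt_succ hn'⟩ :=
          zig _ _ _ hTΔ
        refine ⟨?_, fun hw => absurd hw hle⟩
        rw [hgch n hle hn' hex]
        exact hex.choose_spec.2
  have htrans : ∀ n (hn : n < w'.length), U.Δ (g n) (w'.get ⟨n, hn⟩) (g (n + 1)) := by
    intro n hn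
    by_cases hle : n + 1 ≤ w.length
    · have hlt : n < w.length := hle
      have hgn : g n = TSHom.f p ⟨n, Nat.lt_succ_of_le (Nat.le_of_lt hlt)⟩ :=
        (key n (Nat.lt_succ_of_lt hn)).2 (Nat.le_of_lt hlt)
      have htr : (Lin σ w).Δ ⟨n, Nat.lt_succ_of_le (Nat.le_of_lt hlt)⟩ (w.get ⟨n, hlt⟩)
          ⟨n + 1, Nat.lt_succ_of_le hle⟩ := ⟨rfl, hlt, rfl⟩
      obtain ⟨h2, hgget⟩ := hpref n hlt
      rw [hgn, hgle n hle, show w'.get ⟨n, hn⟩ = w.get ⟨n, hlt⟩ from hgget]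
      exact TSHom.trans p _ _ _ htr
    · obtain ⟨hf, -⟩ := key n (Nat.lt_succ_of_lt hn)
      have htr : (Lin σ w').Δ ⟨n, Nat.lt_succ_of_lt hn⟩ (w'.get ⟨n, hn⟩)
          ⟨n + 1, Nat.succ_lt_succ hn⟩ := ⟨rfl, hn, rfl⟩
      have hTΔ : T.Δ (TSHom.f f (g n)) (w'.get ⟨n, hn⟩)
          (TSHom.f q' ⟨n + 1, Nat.succ_lt_succ hn⟩) := by
        rw [hf]; exact TSHom.trans q' _ _ _ htr
      have hex : ∃ v, U.Δ (g n) (w'.get ⟨n, hn⟩) v ∧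
          TSHom.f f v = TSHom.f q' ⟨n + 1, Nat.succ_lt_succ hn⟩ :=
        zig _ _ _ hTΔ
      rw [hgch n hle hn hex]
      exact hex.choose_spec.1
  refine ⟨⟨fun k => g k.val, ?_, ?_⟩, ?_, ?_⟩
  · exact TSHom.init p
  · rintro s a t ⟨ht1, hlt, ha⟩
    have hstep := htrans s.val hlt
    rw [ha] at hstep
    show U.Δ (g s.val) a (g t.val)
    rw [show t.val = s.val + 1 from ht1]
    exact hstep
  · apply TSHom.ext
    funext k
    show g (TSHom.f e k).val = TSHom.f p k
    have hk : (TSHom.f e k).val = k.val := he k.val k.isLt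
    rw [hk, (key k.val (Nat.lt_succ_of_le (Nat.le_trans (Nat.le_of_lt_succ k.isLt) hlen))).2
      (Nat.le_of_lt_succ k.isLt)]
    rfl
  · apply TSHom.ext
    funext k
    show TSHom.f f (g k.val) = TSHom.f q' k
    rw [(key k.val k.isLt).1]
    rfl

/-- For a strong bisimulation `R`, the two projections of the relation transition
system `T_R` form a span of `Lin_Σ`-open morphisms. -/
theorem stmt8 {σ : Type} (T T' : TS σ) (R : T.S → T'.S → Prop)
    (h : StrongBisim T T' R) :
    ∃ (π₁ : relTS T T' R h.1 ⟶ T) (π₂ : relTS T T' R h.1 ⟶ T'),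
      TSHom.f π₁ = (fun p => p.val.1) ∧ TSHom.f π₂ = (fun p => p.val.2) ∧
      LinOpen π₁ ∧ LinOpen π₂ := by
  refine ⟨⟨fun p => p.val.1, rfl, fun s a t ht => ht.1⟩,
    ⟨fun p => p.val.2, rfl, fun s a t ht => ht.2⟩, rfl, rfl, ?_, ?_⟩
  · apply linOpen_of_zig
    intro u a t ht
    obtain ⟨t', hΔ', hR⟩ := h.2.1 u.val.1 u.val.2 u.prop a t ht
    exact ⟨⟨(t, t'), hR⟩, ⟨ht, hΔ'⟩, rfl⟩
  · apply linOpen_of_zig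
    intro u a t' ht'
    obtain ⟨t, hΔ, hR⟩ := h.2.2 u.val.1 u.val.2 u.prop a t' ht'
    exact ⟨⟨(t, t'), hR⟩, ⟨hΔ, ht'⟩, rfl⟩
end

section
/- A bounded morphism f : T → T' of transition systems with observations is Lin_Σ𝒪-open if and only if its underlying morphism of transition systems W f : WT → WT' is Lin_Σ-open. -/
open CategoryTheory

/-- A transition system with observations in a pseudometric space `O`. -/
structure TSO (σ O : Type) [PseudoMetricSpace O] where
  toTS : TS σ
  ω : toTS.S → O

/-- A bounded morphism of transition systems with observations: a morphism of the
underlying transition systems which is `ε`-bounded for some `ε ≥ 0`. -/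
structure TSOHom {σ O : Type} [PseudoMetricSpace O] (T T' : TSO σ O) where
  toTSHom : TSHom T.toTS T'.toTS
  bounded : ∃ ε, 0 ≤ ε ∧ ∀ s, dist (T.ω s) (T'.ω (toTSHom.f s)) ≤ ε

@[ext] lemma TSOHom.ext {σ O : Type} [PseudoMetricSpace O] {T T' : TSO σ O}
    {g h : TSOHom T T'} (w : g.toTSHom = h.toTSHom) : g = h := by
  cases g; cases h; cases w; rfl

instance {σ O : Type} [PseudoMetricSpace O] : Category (TSO σ O) where
  Hom := TSOHom
  id T := ⟨TSHom.id T.toTS, 0, le_refl 0, fun s => le_of_eq (dist_self (T.ω s))⟩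
  comp {X Y Z} g h := ⟨g.toTSHom.comp h.toTSHom, by
    obtain ⟨ε₁, hε₁, hb₁⟩ := g.bounded
    obtain ⟨ε₂, hε₂, hb₂⟩ := h.bounded
    refine ⟨ε₁ + ε₂, add_nonneg hε₁ hε₂, fun s => ?_⟩
    have htri := dist_triangle (X.ω s) (Y.ω (g.toTSHom.f s))
      (Z.ω (h.toTSHom.f (g.toTSHom.f s)))
    exact le_trans htri (add_le_add (hb₁ s) (hb₂ (g.toTSHom.f s)))⟩
  id_comp _ := by apply TSOHom.ext; rfl
  comp_id _ := by apply TSOHom.ext; rfl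
  assoc _ _ _ := by apply TSOHom.ext; rfl

/-- `f` is an `ε`-bounded morphism. -/
def EBounded {σ O : Type} [PseudoMetricSpace O] {T T' : TSO σ O} (f : T ⟶ T')
    (ε : ℝ) : Prop :=
  ∀ s, dist (T.ω s) (T'.ω ((TSOHom.toTSHom f).f s)) ≤ ε

/-- A finite linear transition system with observations. -/
def LinO (σ O : Type) [PseudoMetricSpace O] (w : List σ)
    (ω : Fin (w.length + 1) → O) : TSO σ O :=
  ⟨Lin σ w, ω⟩

/-- A bounded morphism is `Lin_Σ𝒪`-open if it has the right lifting property
against all (bounded) morphisms between finite linear systems with observations. -/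
def LinOOpen {σ O : Type} [PseudoMetricSpace O] {T T' : TSO σ O} (f : T ⟶ T') : Prop :=
  ∀ (w w' : List σ) (ω₁ : Fin (w.length + 1) → O) (ω₂ : Fin (w'.length + 1) → O)
    (e : LinO σ O w ω₁ ⟶ LinO σ O w' ω₂) (p : LinO σ O w ω₁ ⟶ T)
    (q' : LinO σ O w' ω₂ ⟶ T'),
    p ≫ f = e ≫ q' → ∃ q : LinO σ O w' ω₂ ⟶ T, e ≫ q = p ∧ q ≫ f = q'

/-- A bounded morphism of transition systems with observations is `Lin_Σ𝒪`-open iff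
its underlying morphism of transition systems is `Lin_Σ`-open. -/
theorem stmt9 {σ O : Type} [PseudoMetricSpace O] {T T' : TSO σ O} (f : T ⟶ T') :
    LinOOpen f ↔ LinOpen (TSOHom.toTSHom f) := by
  constructor
  · intro hf w w' e p q' hsq
    -- equip the linear systems with observations pulled back along p and q'
    set ω₁ : Fin (w.length + 1) → O := fun s => T.ω (p.f s) with hω₁
    set ω₂ : Fin (w'.length + 1) → O := fun s => T'.ω (q'.f s) with hω₂
    obtain ⟨ε, hε, hb⟩ := f.bounded
    have hef : ∀ s, (q'.f (e.f s)) = (f.toTSHom.f (p.f s)) := by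
      intro s
      have := congrArg TSHom.f hsq
      exact (congrFun this s).symm
    let eO : LinO σ O w ω₁ ⟶ LinO σ O w' ω₂ :=
      ⟨e, ⟨ε, hε, fun s => by
        show dist (T.ω (p.f s)) (T'.ω (q'.f (e.f s))) ≤ ε
        rw [hef s]; exact hb (p.f s)⟩⟩
    let pO : LinO σ O w ω₁ ⟶ T :=
      ⟨p, ⟨0, le_refl 0, fun s => le_of_eq (dist_self _)⟩⟩
    let q'O : LinO σ O w' ω₂ ⟶ T' :=
      ⟨q', ⟨0, le_refl 0, fun s => le_of_eq (dist_self _)⟩⟩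
    have hsqO : pO ≫ f = eO ≫ q'O := by
      apply TSOHom.ext; exact hsq
    obtain ⟨q, hq1, hq2⟩ := hf w w' ω₁ ω₂ eO pO q'O hsqO
    exact ⟨q.toTSHom, congrArg TSOHom.toTSHom hq1, congrArg TSOHom.toTSHom hq2⟩
  · intro hf w w' ω₁ ω₂ e p q' hsq
    obtain ⟨q, hq1, hq2⟩ := hf w w' e.toTSHom p.toTSHom q'.toTSHom
      (congrArg TSOHom.toTSHom hsq)
    -- q is automatically bounded since its domain is finite
    obtain ⟨ε, hε⟩ := Finite.exists_le (fun s : Fin (w'.length + 1) =>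
      dist ((LinO σ O w' ω₂).ω s) (T.ω (q.f s)))
    refine ⟨⟨q, ⟨max ε 0, le_max_right _ _, fun s => le_trans (hε s) (le_max_left _ _)⟩⟩,
      ?_, ?_⟩
    · apply TSOHom.ext; exact hq1
    · apply TSOHom.ext; exact hq2
end

section
/- If R is an ε-approximate bisimulation between transition systems with observations T and T', then defining T_R = (R, (i,i'), Δ_R, ω_R) with Δ_R = {((s,s'), a, (t,t')) | (s,a,t) ∈ Δ ∧ (s',a,t') ∈ Δ'} and ω_R(s,s') = ω(s), the first projection T_R → T is a 0-bounded Lin_Σ𝒪-open morphism and the second projection T_R → T' is an ε-bounded Lin_Σ𝒪-open morphism. -/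
open CategoryTheory

/-- An `ε`-approximate bisimulation between two transition systems with
observations: a strong bisimulation of the underlying systems along which
observations are within distance `ε`. -/
def ApproxBisim {σ O : Type} [PseudoMetricSpace O] (ε : ℝ) (T T' : TSO σ O)
    (R : T.toTS.S → T'.toTS.S → Prop) : Prop :=
  StrongBisim T.toTS T'.toTS R ∧ ∀ s s', R s s' → dist (T.ω s) (T'.ω s') ≤ ε

/-- The relation transition system with observations `T_R`, with observation
`ω_R(s,s') = ω(s)`. -/
def relTSO {σ O : Type} [PseudoMetricSpace O] (T T' : TSO σ O)
    (R : T.toTS.S → T'.toTS.S → Prop) (h : R T.toTS.i T'.toTS.i) : TSO σ O :=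
  ⟨relTS T.toTS T'.toTS R h, fun p => T.ω p.val.1⟩



section Aux

lemma lin_hom_nat {σ : Type} {w w' : List σ} (e : TSHom (Lin σ w) (Lin σ w')) :
    ∀ (k : ℕ) (hk : k < w.length + 1),
      @Fin.val (w'.length + 1) (e.f (⟨k, hk⟩ : Fin (w.length + 1))) = k := by
  intro k
  induction k with
  | zero => intro hk; exact congrArg Fin.val e.init
  | succ k ih =>
    intro hk
    have hkw : k < w.length := by omega
    obtain ⟨h1, -⟩ := e.trans (⟨k, by omega⟩ : Fin (w.length + 1)) (w.get ⟨k, hkw⟩)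
      (⟨k + 1, hk⟩ : Fin (w.length + 1)) ⟨rfl, hkw, rfl⟩
    rw [h1, ih (by omega)]

lemma lin_hom_len {σ : Type} {w w' : List σ} (e : TSHom (Lin σ w) (Lin σ w')) :
    w.length ≤ w'.length := by
  have h1 := Fin.isLt (e.f (⟨w.length, by omega⟩ : Fin (w.length + 1)))
  have h2 := lin_hom_nat e w.length (by omega)
  omega

lemma lin_hom_get {σ : Type} {w w' : List σ} (e : TSHom (Lin σ w) (Lin σ w'))
    (k : ℕ) (hk : k < w.length) (hk' : k < w'.length) :
    w'.get ⟨k, hk'⟩ = w.get ⟨k, hk⟩ := by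
  obtain ⟨-, hlt, hget⟩ := e.trans (⟨k, by omega⟩ : Fin (w.length + 1)) (w.get ⟨k, hk⟩)
    (⟨k + 1, by omega⟩ : Fin (w.length + 1)) ⟨rfl, hk, rfl⟩
  have heq : (⟨@Fin.val (w'.length + 1) (e.f (⟨k, by omega⟩ : Fin (w.length + 1))), hlt⟩ :
      Fin w'.length) = ⟨k, hk'⟩ := by
    apply Fin.ext
    exact lin_hom_nat e k (by omega)
  rw [heq] at hget
  exact hget

lemma linOOpen_of_zig {σ O : Type} [PseudoMetricSpace O] {T T' : TSO σ O} (F : T ⟶ T')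
    (zig : ∀ s a t', T'.toTS.Δ (F.toTSHom.f s) a t' →
      ∃ t, T.toTS.Δ s a t ∧ F.toTSHom.f t = t') :
    LinOOpen F := by
  classical
  intro w w' ω₁ ω₂ e p q' hcomm
  set f₀ := F.toTSHom.f with hf₀
  let ef : Fin (w.length + 1) → Fin (w'.length + 1) := e.toTSHom.f
  let pf : Fin (w.length + 1) → T.toTS.S := p.toTSHom.f
  let qf : Fin (w'.length + 1) → T'.toTS.S := q'.toTSHom.f
  have hfun : ∀ k : Fin (w.length + 1), f₀ (pf k) = qf (ef k) := by
    intro k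
    exact congrArg (fun (m : TSOHom _ _) => m.toTSHom.f k) hcomm
  have enat : ∀ (k : ℕ) (hk : k < w.length + 1), (ef ⟨k, hk⟩ : ℕ) = k :=
    lin_hom_nat e.toTSHom
  have hlen : w.length ≤ w'.length := lin_hom_len e.toTSHom
  have hget : ∀ (k : ℕ) (hk : k < w.length) (hk' : k < w'.length),
      w'.get ⟨k, hk'⟩ = w.get ⟨k, hk⟩ := lin_hom_get e.toTSHom
  have qtrans : ∀ (k : ℕ) (hk : k < w'.length),
      T'.toTS.Δ (qf ⟨k, by omega⟩) (w'.get ⟨k, hk⟩) (qf ⟨k + 1, by omega⟩) :=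
    fun k hk => q'.toTSHom.trans (⟨k, by omega⟩ : Fin (w'.length + 1)) (w'.get ⟨k, hk⟩)
      (⟨k + 1, by omega⟩ : Fin (w'.length + 1)) ⟨rfl, hk, rfl⟩
  have ptrans : ∀ (k : ℕ) (hk : k < w.length),
      T.toTS.Δ (pf ⟨k, by omega⟩) (w.get ⟨k, hk⟩) (pf ⟨k + 1, by omega⟩) :=
    fun k hk => p.toTSHom.trans (⟨k, by omega⟩ : Fin (w.length + 1)) (w.get ⟨k, hk⟩)
      (⟨k + 1, by omega⟩ : Fin (w.length + 1)) ⟨rfl, hk, rfl⟩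
  let step : ℕ → T.toTS.S → T.toTS.S := fun k gk =>
    if h : k + 1 ≤ w.length then pf ⟨k + 1, by omega⟩
    else if h2 : k < w'.length then
      (if hx : ∃ t, T.toTS.Δ gk (w'.get ⟨k, h2⟩) t ∧ f₀ t = qf ⟨k + 1, by omega⟩
       then hx.choose else gk)
    else gk
  let g : ℕ → T.toTS.S := fun k =>
    Nat.rec (pf ⟨0, Nat.succ_pos _⟩) (fun k gk => step k gk) k
  have g0 : g 0 = pf ⟨0, Nat.succ_pos _⟩ := rfl
  have gsucc : ∀ k, g (k + 1) = step k (g k) := fun _ => rfl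
  have inv1 : ∀ (k : ℕ) (hk : k ≤ w.length), g k = pf ⟨k, by omega⟩ := by
    intro k hk
    cases k with
    | zero => exact g0
    | succ k => rw [gsucc]; simp only [step]; rw [dif_pos hk]
  have key : ∀ (k : ℕ) (hk : k ≤ w'.length), f₀ (g k) = qf ⟨k, by omega⟩ := by
    intro k
    induction k with
    | zero =>
      intro hk
      rw [g0, hfun]
      show qf (ef ⟨0, Nat.succ_pos _⟩) = qf ⟨0, by omega⟩
      congr 1
      apply Fin.ext
      exact enat 0 (by omega)
    | succ k ih =>
      intro hk
      by_cases h : k + 1 ≤ w.length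
      · rw [inv1 (k + 1) h]
        rw [show pf ⟨k + 1, by omega⟩ = pf (⟨k + 1, by omega⟩ : Fin (w.length + 1)) from rfl,
          hfun]
        congr 1
        apply Fin.ext
        exact enat (k + 1) (by omega)
      · have h2 : k < w'.length := by omega
        have hq := qtrans k h2
        rw [← ih (by omega)] at hq
        have hx := zig _ _ _ hq
        rw [gsucc]
        simp only [step]
        rw [dif_neg h, dif_pos h2, dif_pos hx]
        exact hx.choose_spec.2
  have htrans : ∀ (k : ℕ) (hk : k < w'.length),
      T.toTS.Δ (g k) (w'.get ⟨k, hk⟩) (g (k + 1)) := by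
    intro k hk
    by_cases h : k + 1 ≤ w.length
    · have hkw : k < w.length := by omega
      have hp := ptrans k hkw
      rw [← inv1 k (by omega), ← inv1 (k + 1) h] at hp
      rwa [hget k hkw hk]
    · have hq := qtrans k hk
      rw [← key k (by omega)] at hq
      have hx := zig _ _ _ hq
      have hgk : g (k + 1) = hx.choose := by
        rw [gsucc]; simp only [step]; rw [dif_neg h, dif_pos hk, dif_pos hx]
      rw [hgk]
      exact hx.choose_spec.1
  obtain ⟨B, hB⟩ := Finite.exists_le
    (fun k : Fin (w'.length + 1) => dist (ω₂ k) (T.ω (g (k : ℕ))))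
  refine ⟨⟨⟨fun k : Fin (w'.length + 1) => g (k : ℕ), ?_, ?_⟩, ?_⟩, ?_, ?_⟩
  · show g 0 = T.toTS.i
    rw [g0]; exact p.toTSHom.init
  · intro s a t ht
    let s' : Fin (w'.length + 1) := s
    let t' : Fin (w'.length + 1) := t
    obtain ⟨h1, hs, hEq⟩ := ht
    show T.toTS.Δ (g (s' : ℕ)) a (g (t' : ℕ))
    have h1' : (t' : ℕ) = (s' : ℕ) + 1 := h1
    rw [h1', ← hEq]
    exact htrans (s' : ℕ) hs
  · exact ⟨max B 0, le_max_right _ _, fun s => le_trans (hB s) (le_max_left _ _)⟩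
  · apply TSOHom.ext; apply TSHom.ext; funext k
    let k' : Fin (w.length + 1) := k
    show g ((ef k' : Fin (w'.length + 1)) : ℕ) = pf k'
    have hk : ((ef k' : Fin (w'.length + 1)) : ℕ) = (k' : ℕ) := by
      have := enat (k' : ℕ) k'.isLt
      rwa [show (⟨(k' : ℕ), k'.isLt⟩ : Fin (w.length + 1)) = k' from rfl] at this
    rw [hk, inv1 (k' : ℕ) (by omega)]
    exact congrArg pf rfl
  · apply TSOHom.ext; apply TSHom.ext; funext k
    let k' : Fin (w'.length + 1) := k
    show f₀ (g (k' : ℕ)) = qf k'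
    rw [key (k' : ℕ) (by omega)]
    exact congrArg qf rfl

end Aux

/-- For an `ε`-approximate bisimulation `R`, the first projection of `T_R` is a
`0`-bounded `Lin_Σ𝒪`-open morphism and the second projection is an `ε`-bounded
`Lin_Σ𝒪`-open morphism. -/
theorem stmt11 {σ O : Type} [PseudoMetricSpace O] (ε : ℝ) (T T' : TSO σ O)
    (R : T.toTS.S → T'.toTS.S → Prop) (h : ApproxBisim ε T T' R) :
    ∃ (π₁ : relTSO T T' R h.1.1 ⟶ T) (π₂ : relTSO T T' R h.1.1 ⟶ T'),
      (TSOHom.toTSHom π₁).f = (fun p => p.val.1) ∧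
      (TSOHom.toTSHom π₂).f = (fun p => p.val.2) ∧
      EBounded π₁ 0 ∧ LinOOpen π₁ ∧ EBounded π₂ ε ∧ LinOOpen π₂ := by
  have hRi : R T.toTS.i T'.toTS.i := h.1.1
  have hε0 : 0 ≤ ε := le_trans dist_nonneg (h.2 _ _ hRi)
  refine ⟨⟨⟨fun p => p.val.1, rfl, fun s a t ht => ht.1⟩,
      0, le_refl 0, fun s => le_of_eq (dist_self _)⟩,
    ⟨⟨fun p => p.val.2, rfl, fun s a t ht => ht.2⟩,
      ε, hε0, fun s => h.2 _ _ s.prop⟩, rfl, rfl, ?_, ?_, ?_, ?_⟩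
  · intro s; exact le_of_eq (dist_self _)
  · apply linOOpen_of_zig
    intro s a t' ht
    obtain ⟨y', hy1, hy2⟩ := h.1.2.1 s.val.1 s.val.2 s.prop a t' ht
    exact ⟨⟨(t', y'), hy2⟩, ⟨ht, hy1⟩, rfl⟩
  · intro s; exact h.2 _ _ s.prop
  · apply linOOpen_of_zig
    intro s a t' ht
    obtain ⟨y, hy1, hy2⟩ := h.1.2.2 s.val.1 s.val.2 s.prop a t' ht
    exact ⟨⟨(y, t'), hy2⟩, ⟨hy1, ht⟩, rfl⟩
end

section
/- Two transition systems with observations T and T' are ε-approximate bisimilar if and only if their unfoldings V(T) and V(T') are ε-approximate bisimilar. -/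
open CategoryTheory

/-- The ending state of a run, represented as a reversed list of (label, state)
steps: the empty run ends at the initial state. -/
def endSt {σ : Type} (T : TS σ) : List (σ × T.S) → T.S
  | [] => T.i
  | (_, t) :: _ => t

/-- `Ok T l` states that the reversed list `l` of steps is a run of `T` from the
initial state. -/
inductive Ok {σ : Type} (T : TS σ) : List (σ × T.S) → Prop
  | nil : Ok T []
  | cons {l : List (σ × T.S)} {a : σ} {t : T.S} :
      Ok T l → T.Δ (endSt T l) a t → Ok T ((a, t) :: l)

/-- The unfolding of a transition system: states are the finite runs from the
initial state, the initial state is the empty run, and transitions extend a run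
by one transition. -/
def unfoldTS {σ : Type} (T : TS σ) : TS σ where
  S := {l : List (σ × T.S) // Ok T l}
  i := ⟨[], Ok.nil⟩
  Δ r a r' := ∃ t : T.S, r'.val = (a, t) :: r.val ∧ T.Δ (endSt T r.val) a t

/-- The unfolding of a transition system with observations. -/
def unfoldTSO {σ O : Type} [PseudoMetricSpace O] (T : TSO σ O) : TSO σ O :=
  ⟨unfoldTS T.toTS, fun r => T.ω (endSt T.toTS r.val)⟩

/-- `T` and `T'` are `ε`-approximate bisimilar iff their unfoldings are
`ε`-approximate bisimilar. -/
theorem stmt18 {σ O : Type} [PseudoMetricSpace O] (ε : ℝ) (T T' : TSO σ O) :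
    (∃ R, ApproxBisim ε T T' R) ↔
    (∃ R, ApproxBisim ε (unfoldTSO T) (unfoldTSO T') R) := by
  constructor
  · rintro ⟨R, ⟨hi, hfwd, hbwd⟩, hd⟩
    refine ⟨fun r r' => R (endSt T.toTS r.val) (endSt T'.toTS r'.val),
      ⟨hi, ?_, ?_⟩, fun r r' h => hd _ _ h⟩
    · rintro r r' hR a t ⟨u, hval, hΔ⟩
      obtain ⟨u', hΔ', hR'⟩ := hfwd _ _ hR a u hΔ
      exact ⟨⟨(a, u') :: r'.val, Ok.cons r'.prop hΔ'⟩, ⟨u', rfl, hΔ'⟩,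
        by simpa [hval, endSt] using hR'⟩
    · rintro r r' hR a t' ⟨u', hval, hΔ'⟩
      obtain ⟨u, hΔ, hR'⟩ := hbwd _ _ hR a u' hΔ'
      exact ⟨⟨(a, u) :: r.val, Ok.cons r.prop hΔ⟩, ⟨u, rfl, hΔ⟩,
        by simpa [hval, endSt] using hR'⟩
  · rintro ⟨R, ⟨hi, hfwd, hbwd⟩, hd⟩
    refine ⟨fun s s' => ∃ r r', R r r' ∧ endSt T.toTS r.val = s ∧
      endSt T'.toTS r'.val = s', ⟨⟨_, _, hi, rfl, rfl⟩, ?_, ?_⟩, ?_⟩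
    · rintro s s' ⟨r, r', hR, rfl, rfl⟩ a t hΔ
      obtain ⟨r'', ⟨t', hval, hΔ'⟩, hR'⟩ :=
        hfwd r r' hR a ⟨(a, t) :: r.val, Ok.cons r.prop hΔ⟩ ⟨t, rfl, hΔ⟩
      exact ⟨t', hΔ', _, _, hR', rfl, by rw [hval]; rfl⟩
    · rintro s s' ⟨r, r', hR, rfl, rfl⟩ a t' hΔ'
      obtain ⟨r'', ⟨t, hval, hΔ⟩, hR'⟩ :=
        hbwd r r' hR a ⟨(a, t') :: r'.val, Ok.cons r'.prop hΔ'⟩ ⟨t', rfl, hΔ'⟩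
      exact ⟨t, hΔ, _, _, hR', by rw [hval]; rfl, rfl⟩
    · rintro s s' ⟨r, r', hR, rfl, rfl⟩
      exact hd r r' hR
end

section
/- Let Θ : TTS_Σ → TS_{Σ×ℝ>0} be the configuration-semantics functor for timed transition systems: Θ(S, i, C, Δ) has states S × (ℝ≥0)^C, initial state (i, 0̃), and a transition ((s,ν), (a,t), (s',ν')) iff there is (s, a, R, Πc Ic, s') ∈ Δ with ν(c) + t ∈ Ic for all c, and ν' = (ν + t)[R := 0]. Then for a morphism (f, g) : T → T' of timed transition systems, the map (s, ν) ↦ (f(s), ν ∘ g) is a morphism of transition systems Θ(T) → Θ(T'), and this assignment is functorial. -/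
open CategoryTheory

/-- A timed transition system: transitions carry a label, a set of clocks to
reset, and a guard which is a product of nonempty nonnegative intervals. -/
structure TTS (σ : Type) where
  S : Type
  i : S
  C : Type
  Δ : S → σ → Set C → (C → Set ℝ) → S → Prop
  guard_wf : ∀ s a R I s', Δ s a R I s' → ∀ c : C,
    (I c).Nonempty ∧ (I c).OrdConnected ∧ I c ⊆ Set.Ici (0 : ℝ)

/-- A morphism of timed transition systems: a covariant state map `f` and a
contravariant clock map `g` such that every transition is simulated with resets
`R' = g⁻¹(R)` and pointwise larger guards. -/
structure TTSHom {σ : Type} (T T' : TTS σ) where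
  f : T.S → T'.S
  g : T'.C → T.C
  init : f T.i = T'.i
  trans : ∀ s a R I s', T.Δ s a R I s' →
    ∃ R' I', T'.Δ (f s) a R' I' (f s') ∧ R' = g ⁻¹' R ∧ ∀ c', I (g c') ⊆ I' c'

/-- The identity morphism of timed transition systems. -/
def TTSHom.id {σ : Type} (T : TTS σ) : TTSHom T T where
  f := _root_.id
  g := _root_.id
  init := rfl
  trans := fun s a R I s' h => ⟨R, I, h, rfl, fun _ => subset_rfl⟩

/-- Composition of morphisms of timed transition systems. -/
def TTSHom.comp {σ : Type} {T T' T'' : TTS σ} (u : TTSHom T T') (v : TTSHom T' T'') :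
    TTSHom T T'' where
  f := v.f ∘ u.f
  g := u.g ∘ v.g
  init := by simp [u.init, v.init]
  trans := by
    intro s a R I s' h
    obtain ⟨R', I', h', hR', hI'⟩ := u.trans s a R I s' h
    obtain ⟨R'', I'', h'', hR'', hI''⟩ := v.trans _ a R' I' _ h'
    exact ⟨R'', I'', h'', by rw [hR'', hR']; rfl,
      fun c'' => (hI' (v.g c'')).trans (hI'' c'')⟩

/-- The configuration semantics of a timed transition system: states are pairs of
a state and a clock valuation, labels are pairs of a letter and a positive
duration. -/
def ThetaObj {σ : Type} (T : TTS σ) : TS (σ × {t : NNReal // 0 < t}) where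
  S := T.S × (T.C → NNReal)
  i := (T.i, fun _ => 0)
  Δ := fun p l q => ∃ R I, T.Δ p.1 l.1 R I q.1 ∧
    (∀ c, ((p.2 c : ℝ) + (l.2.val : ℝ)) ∈ I c) ∧
    (∀ c ∈ R, q.2 c = 0) ∧ (∀ c ∉ R, q.2 c = p.2 c + l.2.val)

/-- For each morphism `(f, g)` of timed transition systems, the map
`(s, ν) ↦ (f s, ν ∘ g)` is a morphism of transition systems between the
configuration semantics, and this assignment is functorial. -/
theorem stmt19 (σ : Type) :
    ∃ Θmap : ∀ {T T' : TTS σ}, TTSHom T T' → (ThetaObj T ⟶ ThetaObj T'),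
      (∀ (T T' : TTS σ) (u : TTSHom T T') (p : (ThetaObj T).S),
          TSHom.f (Θmap u) p = (u.f p.1, p.2 ∘ u.g)) ∧
      (∀ T : TTS σ, Θmap (TTSHom.id T) = 𝟙 (ThetaObj T)) ∧
      (∀ (T T' T'' : TTS σ) (u : TTSHom T T') (v : TTSHom T' T''),
          Θmap (u.comp v) = Θmap u ≫ Θmap v) := by
  refine ⟨fun {T T'} u => ⟨fun p => (u.f p.1, p.2 ∘ u.g), by
    simp only [ThetaObj, u.init]
    rfl, ?_⟩, fun _ _ _ _ => rfl, fun T => rfl, fun T T' T'' u v => rfl⟩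
  rintro ⟨s, ν⟩ ⟨a, t⟩ ⟨s2, ν2⟩ ⟨R, I, h, hmem, hres, hkeep⟩
  obtain ⟨R', I', h', hR', hI'⟩ := u.trans s a R I s2 h
  refine ⟨R', I', h', fun c' => hI' c' (hmem (u.g c')), ?_, ?_⟩
  · intro c' hc'
    exact hres (u.g c') (by rwa [hR'] at hc')
  · intro c' hc'
    exact hkeep (u.g c') (by rwa [hR'] at hc')
end
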